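/- arXiv:2601.08736 — 2 statements merged into one kernel-verified Lean document; each statement's English description precedes it below -/
import Mathlib

section
/- Let p ≥ 1 and let U₁, U₂ be i.i.d. random vectors in ℝᵖ with ‖Uᵢ‖ = 1 almost surely. Set Σ_U := E[U₁U₁ᵀ] and τ := E[(U₁ᵀU₂)²], and assume τ > 0. Then τ = tr(Σ_U²), and 1 ≤ E[(U₁ᵀU₂)⁴]/τ² ≤ 1/τ ≤ p. -/
open MeasureTheory ProbabilityTheory Matrix

/-- For i.i.d. unit-norm random vectors `U₁, U₂` in `ℝᵖ` with
`Σ_U = E[U₁U₁ᵀ]` and `τ = E[(U₁ᵀU₂)²] > 0`, one has `τ = tr(Σ_U²)` and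
`1 ≤ E[(U₁ᵀU₂)⁴]/τ² ≤ 1/τ ≤ p`. -/
theorem kappa4_universal_bound
    {Ω : Type*} [MeasurableSpace Ω] (μ : Measure Ω) [IsProbabilityMeasure μ]
    (p : ℕ) (hp : 1 ≤ p) (U₁ U₂ : Ω → Fin p → ℝ)
    (hU₁ : Measurable U₁) (hU₂ : Measurable U₂)
    (hindep : IndepFun U₁ U₂ μ)
    (hid : Measure.map U₂ μ = Measure.map U₁ μ)
    (hnorm₁ : ∀ᵐ ω ∂μ, U₁ ω ⬝ᵥ U₁ ω = 1) (hnorm₂ : ∀ᵐ ω ∂μ, U₂ ω ⬝ᵥ U₂ ω = 1)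
    (S : Matrix (Fin p) (Fin p) ℝ) (hS : ∀ k l, S k l = ∫ ω, U₁ ω k * U₁ ω l ∂μ)
    (τ : ℝ) (hτdef : τ = ∫ ω, (U₁ ω ⬝ᵥ U₂ ω) ^ 2 ∂μ) (hτpos : 0 < τ) :
    τ = (S * S).trace ∧
    1 ≤ (∫ ω, (U₁ ω ⬝ᵥ U₂ ω) ^ 4 ∂μ) / τ ^ 2 ∧
    (∫ ω, (U₁ ω ⬝ᵥ U₂ ω) ^ 4 ∂μ) / τ ^ 2 ≤ 1 / τ ∧
    1 / τ ≤ (p : ℝ) := by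
  -- a.e. bounds on coordinates
  have hb₁ : ∀ᵐ ω ∂μ, ∀ k, |U₁ ω k| ≤ 1 := by
    filter_upwards [hnorm₁] with ω h k
    have : U₁ ω k ^ 2 ≤ 1 := by
      rw [← h]
      simpa [dotProduct, sq] using Finset.single_le_sum (f := fun i => U₁ ω i * U₁ ω i)
        (fun i _ => mul_self_nonneg _) (Finset.mem_univ k)
    nlinarith [abs_nonneg (U₁ ω k), sq_abs (U₁ ω k)]
  have hb₂ : ∀ᵐ ω ∂μ, ∀ k, |U₂ ω k| ≤ 1 := by
    filter_upwards [hnorm₂] with ω h k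
    have : U₂ ω k ^ 2 ≤ 1 := by
      rw [← h]
      simpa [dotProduct, sq] using Finset.single_le_sum (f := fun i => U₂ ω i * U₂ ω i)
        (fun i _ => mul_self_nonneg _) (Finset.mem_univ k)
    nlinarith [abs_nonneg (U₂ ω k), sq_abs (U₂ ω k)]
  -- |X| ≤ 1 a.e.
  set X : Ω → ℝ := fun ω => U₁ ω ⬝ᵥ U₂ ω with hX
  have hXmeas : Measurable X := by
    apply Finset.measurable_sum
    exact fun i _ => ((measurable_pi_apply i).comp hU₁).mul ((measurable_pi_apply i).comp hU₂)
  have hXb : ∀ᵐ ω ∂μ, |X ω| ≤ 1 := by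
    filter_upwards [hnorm₁, hnorm₂] with ω h1 h2
    have hcs := Finset.sum_mul_sq_le_sq_mul_sq Finset.univ (U₁ ω) (U₂ ω)
    have : X ω ^ 2 ≤ 1 := by
      have : X ω ^ 2 ≤ (U₁ ω ⬝ᵥ U₁ ω) * (U₂ ω ⬝ᵥ U₂ ω) := by
        simpa [hX, dotProduct, sq] using hcs
      simpa [h1, h2] using this
    nlinarith [abs_nonneg (X ω), sq_abs (X ω)]
  -- integrability
  have hint : ∀ n : ℕ, Integrable (fun ω => X ω ^ n) μ := by
    intro n
    refine Integrable.mono' (integrable_const 1) (hXmeas.pow_const n).aestronglyMeasurable ?_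
    filter_upwards [hXb] with ω h
    calc ‖X ω ^ n‖ = |X ω| ^ n := by simp [abs_pow]
    _ ≤ 1 ^ n := pow_le_pow_left₀ (abs_nonneg _) h n
    _ = 1 := one_pow n
  have hint2 := hint 2
  have hint4 := hint 4
  -- integrability of coordinate products
  have hintc₁ : ∀ k l, Integrable (fun ω => U₁ ω k * U₁ ω l) μ := by
    intro k l
    refine Integrable.mono' (integrable_const 1)
      ((((measurable_pi_apply k).comp hU₁).mul
        ((measurable_pi_apply l).comp hU₁)).aestronglyMeasurable) ?_
    filter_upwards [hb₁] with ω h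
    calc ‖U₁ ω k * U₁ ω l‖ = |U₁ ω k| * |U₁ ω l| := abs_mul _ _
    _ ≤ 1 * 1 := mul_le_mul (h k) (h l) (abs_nonneg _) zero_le_one
    _ = 1 := one_mul 1
  have hintc₂ : ∀ k l, Integrable (fun ω => U₂ ω k * U₂ ω l) μ := by
    intro k l
    refine Integrable.mono' (integrable_const 1)
      ((((measurable_pi_apply k).comp hU₂).mul
        ((measurable_pi_apply l).comp hU₂)).aestronglyMeasurable) ?_
    filter_upwards [hb₂] with ω h
    calc ‖U₂ ω k * U₂ ω l‖ = |U₂ ω k| * |U₂ ω l| := abs_mul _ _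
    _ ≤ 1 * 1 := mul_le_mul (h k) (h l) (abs_nonneg _) zero_le_one
    _ = 1 := one_mul 1
  have hintprod : ∀ k l, Integrable (fun ω => (U₁ ω k * U₁ ω l) * (U₂ ω k * U₂ ω l)) μ := by
    intro k l
    refine Integrable.mono' (integrable_const 1)
      (((((measurable_pi_apply k).comp hU₁).mul ((measurable_pi_apply l).comp hU₁)).mul
        (((measurable_pi_apply k).comp hU₂).mul
          ((measurable_pi_apply l).comp hU₂))).aestronglyMeasurable) ?_
    filter_upwards [hb₁, hb₂] with ω h1 h2
    have p1 : |U₁ ω k| * |U₁ ω l| ≤ 1 := mul_le_one₀ (h1 k) (abs_nonneg _) (h1 l)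
    have p2 : |U₂ ω k| * |U₂ ω l| ≤ 1 := mul_le_one₀ (h2 k) (abs_nonneg _) (h2 l)
    calc ‖U₁ ω k * U₁ ω l * (U₂ ω k * U₂ ω l)‖
        = |U₁ ω k| * |U₁ ω l| * (|U₂ ω k| * |U₂ ω l|) := by
          simp [abs_mul]
    _ ≤ 1 * 1 := mul_le_mul p1 p2 (mul_nonneg (abs_nonneg _) (abs_nonneg _)) zero_le_one
    _ = 1 := one_mul 1
  -- second moments of U₂ agree with U₁
  have hS₂ : ∀ k l, (∫ ω, U₂ ω k * U₂ ω l ∂μ) = S k l := by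
    intro k l
    have hm : Measurable fun v : Fin p → ℝ => v k * v l :=
      (measurable_pi_apply k).mul (measurable_pi_apply l)
    rw [hS k l,
      ← integral_map hU₂.aemeasurable hm.aestronglyMeasurable,
      hid, integral_map hU₁.aemeasurable hm.aestronglyMeasurable]
  -- key identity: τ = ∑ k l, S k l ^ 2
  have hτsum : τ = ∑ k : Fin p, ∑ l : Fin p, S k l ^ 2 := by
    have hexp : ∀ ω, X ω ^ 2
        = ∑ k : Fin p, ∑ l : Fin p, (U₁ ω k * U₁ ω l) * (U₂ ω k * U₂ ω l) := by
      intro ω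
      simp only [hX, dotProduct, sq, Finset.sum_mul_sum]
      congr 1; ext k; congr 1; ext l; ring
    rw [hτdef]
    calc (∫ ω, X ω ^ 2 ∂μ)
        = ∫ ω, ∑ k : Fin p, ∑ l : Fin p, (U₁ ω k * U₁ ω l) * (U₂ ω k * U₂ ω l) ∂μ := by
          simp_rw [hexp]
      _ = ∑ k : Fin p, ∑ l : Fin p, ∫ ω, (U₁ ω k * U₁ ω l) * (U₂ ω k * U₂ ω l) ∂μ := by
          rw [integral_finset_sum _ fun k _ => integrable_finset_sum _ fun l _ => hintprod k l]
          exact Finset.sum_congr rfl fun k _ => integral_finset_sum _ fun l _ => hintprod k l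
      _ = ∑ k : Fin p, ∑ l : Fin p, S k l ^ 2 := by
          refine Finset.sum_congr rfl fun k _ => Finset.sum_congr rfl fun l _ => ?_
          have hind : IndepFun (fun ω => U₁ ω k * U₁ ω l) (fun ω => U₂ ω k * U₂ ω l) μ :=
            hindep.comp ((measurable_pi_apply k).mul (measurable_pi_apply l))
              ((measurable_pi_apply k).mul (measurable_pi_apply l))
          have := hind.integral_mul_eq_mul_integral (hintc₁ k l).aestronglyMeasurable (hintc₂ k l).aestronglyMeasurable
          rw [show (∫ ω, (U₁ ω k * U₁ ω l) * (U₂ ω k * U₂ ω l) ∂μ)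
              = integral μ ((fun ω => U₁ ω k * U₁ ω l) * fun ω => U₂ ω k * U₂ ω l) from rfl,
            this, hS₂ k l, ← hS k l, sq]
  -- Part 1: trace
  have hsymm : ∀ k l, S k l = S l k := by
    intro k l; rw [hS, hS]; congr 1; ext ω; ring
  have htrace : τ = (S * S).trace := by
    rw [hτsum, Matrix.trace]
    refine Finset.sum_congr rfl fun k _ => ?_
    simp only [Matrix.diag_apply, Matrix.mul_apply]
    refine Finset.sum_congr rfl fun l _ => ?_
    rw [sq, hsymm k l]
  -- Jensen: τ^2 ≤ ∫ X⁴
  have hjensen : τ ^ 2 ≤ ∫ ω, X ω ^ 4 ∂μ := by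
    have hm2 : MemLp (fun ω => X ω ^ 2) 2 μ := by
      refine MemLp.of_bound (hXmeas.pow_const 2).aestronglyMeasurable 1 ?_
      filter_upwards [hXb] with ω h
      have : |X ω| ^ 2 ≤ 1 ^ 2 := pow_le_pow_left₀ (abs_nonneg _) h 2
      simpa [abs_pow, sq_abs] using this
    have h0 := variance_nonneg (fun ω => X ω ^ 2) μ
    rw [variance_eq_sub hm2] at h0
    simp only [Pi.pow_apply] at h0
    have h44 : ∫ ω, (X ω ^ 2) ^ 2 ∂μ = ∫ ω, X ω ^ 4 ∂μ := by
      refine integral_congr_ae (Filter.Eventually.of_forall fun ω => ?_)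
      ring
    rw [h44, ← hτdef] at h0
    linarith
  -- X⁴ ≤ X² pointwise a.e.
  have h42 : (∫ ω, X ω ^ 4 ∂μ) ≤ τ := by
    rw [hτdef]
    refine integral_mono_ae hint4 hint2 ?_
    filter_upwards [hXb] with ω h
    show X ω ^ 4 ≤ X ω ^ 2
    have hx2 : X ω ^ 2 ≤ 1 := by nlinarith [sq_abs (X ω), abs_nonneg (X ω)]
    nlinarith [sq_nonneg (X ω)]
  have hτ2pos : (0:ℝ) < τ ^ 2 := pow_pos hτpos 2
  refine ⟨htrace, (one_le_div hτ2pos).2 hjensen, ?_, ?_⟩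
  · calc (∫ ω, X ω ^ 4 ∂μ) / τ ^ 2 ≤ τ / τ ^ 2 := by gcongr
    _ = 1 / τ := by
        rw [sq, div_mul_eq_div_div, div_self hτpos.ne']
  · -- trace S = 1 and Cauchy–Schwarz on the diagonal
    have htr1 : ∑ k : Fin p, S k k = 1 := by
      have : ∑ k : Fin p, S k k = ∫ ω, ∑ k : Fin p, U₁ ω k * U₁ ω k ∂μ := by
        simp_rw [hS]
        exact (integral_finset_sum _ fun k _ => hintc₁ k k).symm
      rw [this]
      have : ∫ ω, ∑ k : Fin p, U₁ ω k * U₁ ω k ∂μ = ∫ (_ : Ω), (1:ℝ) ∂μ := by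
        refine integral_congr_ae ?_
        filter_upwards [hnorm₁] with ω h
        simpa [dotProduct] using h
      rw [this]; simp
    have hcs : (1:ℝ) ≤ (p : ℝ) * ∑ k : Fin p, S k k ^ 2 := by
      have := sq_sum_le_card_mul_sum_sq (s := (Finset.univ : Finset (Fin p)))
        (f := fun k => S k k)
      rw [htr1] at this
      simpa using this
    have hdiag : (∑ k : Fin p, S k k ^ 2) ≤ ∑ k : Fin p, ∑ l : Fin p, S k l ^ 2 :=
      Finset.sum_le_sum fun k _ =>
        Finset.single_le_sum (f := fun l => S k l ^ 2) (fun l _ => sq_nonneg _)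
          (Finset.mem_univ k)
    rw [div_le_iff₀ hτpos]
    have hpn : (0:ℝ) ≤ (p:ℝ) := Nat.cast_nonneg p
    calc (1:ℝ) ≤ (p:ℝ) * ∑ k : Fin p, S k k ^ 2 := hcs
    _ ≤ (p:ℝ) * ∑ k : Fin p, ∑ l : Fin p, S k l ^ 2 := by
        exact mul_le_mul_of_nonneg_left hdiag hpn
    _ = (p:ℝ) * τ := by rw [← hτsum]
end

section
/- Let p ≥ 2, σ > 0, and −1/(p−1) < ρ < 1. Let Σ := σ²{(1−ρ)I_p + ρ 𝟙𝟙ᵀ} where 𝟙 = (1,…,1)ᵀ ∈ ℝᵖ, let u₀ := 𝟙/√p, and let γ := ρp/(1−ρ). Then Σ is positive definite; let Σ^{1/2} denote its positive semidefinite square root. For every unit vector s ∈ ℝᵖ, writing t := (u₀ᵀ s)², it holds that (u₀ᵀ Σ^{1/2} s)² / (sᵀ Σ s) = (1+γ)t / (1+γt). -/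
open Matrix

/-- For the compound-symmetric matrix
`Σ = σ²{(1−ρ)I_p + ρ 𝟙𝟙ᵀ}` with `p ≥ 2`, `σ > 0`, `−1/(p−1) < ρ < 1`, `u₀ = 𝟙/√p`, and
`γ = ρp/(1−ρ)`: `Σ` is positive definite, and for any positive semidefinite square root
`R` of `Σ` (`R R = Σ`, i.e. `R Rᵀ = Σ` as `R` is symmetric) and every unit vector `s`,
writing `t = (u₀ᵀs)²`, one has `(u₀ᵀ R s)²/(sᵀ Σ s) = (1+γ)t/(1+γt)`. -/
theorem compound_symmetric_projection_identity
    (p : ℕ) (hp : 2 ≤ p) (σ ρ : ℝ) (hσ : 0 < σ)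
    (hρ₁ : -(1 / ((p : ℝ) - 1)) < ρ) (hρ₂ : ρ < 1)
    (S : Matrix (Fin p) (Fin p) ℝ)
    (hS : S = (σ ^ 2) • ((1 - ρ) • (1 : Matrix (Fin p) (Fin p) ℝ)
        + ρ • (Matrix.of fun _ _ => (1 : ℝ))))
    (u₀ : Fin p → ℝ) (hu₀ : u₀ = fun _ => 1 / Real.sqrt p)
    (γ : ℝ) (hγ : γ = ρ * p / (1 - ρ)) :
    S.PosDef ∧
    ∀ R : Matrix (Fin p) (Fin p) ℝ, R.PosSemidef → R * R = S →
      ∀ s : Fin p → ℝ, s ⬝ᵥ s = 1 →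
        (u₀ ⬝ᵥ R.mulVec s) ^ 2 / (s ⬝ᵥ S.mulVec s)
          = (1 + γ) * (u₀ ⬝ᵥ s) ^ 2 / (1 + γ * (u₀ ⬝ᵥ s) ^ 2) := by
  have hp2 : (2:ℝ) ≤ (p:ℝ) := by exact_mod_cast hp
  have hpm : (0:ℝ) < (p:ℝ) - 1 := by linarith
  have hp0 : (0:ℝ) < (p:ℝ) := by linarith
  have h1ρ : (0:ℝ) < 1 - ρ := by linarith
  -- 1 + ρ(p-1) > 0
  have hρp : 0 < 1 - ρ + ρ * p := by
    have h := (div_lt_iff₀ hpm).mp (by rw [neg_div]; exact hρ₁ : (-1:ℝ)/((p:ℝ)-1) < ρ)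
    nlinarith
  have hlampos : 0 < σ^2 * (1 - ρ + ρ * p) := by positivity
  -- entries / mulVec of S
  have hSapp : ∀ i j, S i j = σ^2 * ((1-ρ) * (if i = j then 1 else 0) + ρ) := by
    intro i j
    rw [hS]
    rcases eq_or_ne i j with h | h <;> simp [Matrix.one_apply, h] <;> try ring
  have hmul : ∀ x : Fin p → ℝ, S.mulVec x
      = fun i => σ^2 * ((1-ρ) * x i + ρ * ∑ j, x j) := by
    intro x; funext i
    have key : ∀ j, S i j * x j
        = (if i = j then σ^2*(1-ρ)*x j else 0) + σ^2*ρ*x j := by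
      intro j; rw [hSapp i j]; split <;> ring
    simp only [Matrix.mulVec, dotProduct]
    rw [Finset.sum_congr rfl fun j _ => key j, Finset.sum_add_distrib,
      Finset.sum_ite_eq, ← Finset.mul_sum]
    simp
    ring
  have hquad : ∀ x : Fin p → ℝ, x ⬝ᵥ S.mulVec x
      = σ^2 * ((1-ρ) * (x ⬝ᵥ x) + ρ * (∑ j, x j)^2) := by
    intro x
    rw [hmul]
    simp only [dotProduct]
    rw [Finset.sum_congr rfl (fun i _ => by ring :
      ∀ i ∈ Finset.univ, x i * (σ^2 * ((1-ρ) * x i + ρ * ∑ j, x j))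
        = σ^2 * (1-ρ) * (x i * x i) + σ^2 * ρ * (∑ j, x j) * x i)]
    rw [Finset.sum_add_distrib, ← Finset.mul_sum, ← Finset.mul_sum]
    ring
  -- positivity of quadratic form
  have hqpos : ∀ x : Fin p → ℝ, x ≠ 0 → 0 < x ⬝ᵥ S.mulVec x := by
    intro x hx
    rw [hquad]
    have hxx : 0 < x ⬝ᵥ x := by
      rcases lt_or_eq_of_le (Finset.sum_nonneg fun i _ => mul_self_nonneg (x i)
        : 0 ≤ x ⬝ᵥ x) with h | h
      · exact h
      · exact absurd (dotProduct_self_eq_zero.mp h.symm) hx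
    have hcs : (∑ j, x j)^2 ≤ p * (x ⬝ᵥ x) := by
      have := sq_sum_le_card_mul_sum_sq (s := (Finset.univ : Finset (Fin p))) (f := x)
      simpa [dotProduct, sq, Finset.card_univ] using this
    have hσ2 : (0:ℝ) < σ^2 := by positivity
    have hA : 0 < (1-ρ) * (x ⬝ᵥ x) + ρ * (∑ j, x j)^2 := by
      rcases le_or_gt 0 ρ with hρ | hρ
      · nlinarith [mul_pos h1ρ hxx, mul_nonneg hρ (sq_nonneg (∑ j, x j))]
      · nlinarith [mul_pos hρp hxx, mul_le_mul_of_nonpos_left hcs hρ.le]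
    exact mul_pos hσ2 hA
  have hPD : S.PosDef := by
    refine Matrix.PosDef.of_dotProduct_mulVec_pos ?_ ?_
    · rw [hS]
      ext i j
      simp [Matrix.conjTranspose_apply, Matrix.one_apply, eq_comm]
      rcases eq_or_ne i j with h | h <;> simp [h] <;> ring
    · intro x hx
      simpa using hqpos x hx
  refine ⟨hPD, ?_⟩
  intro R hR hRR s hs
  -- eigenvector
  have hsum_u : (∑ j, u₀ j) = Real.sqrt p := by
    subst hu₀
    have hsp : Real.sqrt p > 0 := Real.sqrt_pos.mpr hp0
    rw [Finset.sum_const, Finset.card_univ, Fintype.card_fin]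
    rw [nsmul_eq_mul, mul_one_div, div_eq_iff hsp.ne', Real.mul_self_sqrt hp0.le]
  have hSu : S.mulVec u₀ = (σ^2 * (1 - ρ + ρ * p)) • u₀ := by
    rw [hmul]
    funext i
    subst hu₀
    have hsp : Real.sqrt p > 0 := Real.sqrt_pos.mpr hp0
    have : (∑ j : Fin p, (1:ℝ) / Real.sqrt p) = Real.sqrt p := by
      rw [Finset.sum_const, Finset.card_univ, Fintype.card_fin]
      rw [nsmul_eq_mul, mul_one_div, div_eq_iff hsp.ne', Real.mul_self_sqrt hp0.le]
    simp only [this, Pi.smul_apply, smul_eq_mul]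
    have hss : Real.sqrt p * Real.sqrt p = p := Real.mul_self_sqrt hp0.le
    field_simp
    nlinarith [hss]
  set lam := σ^2 * (1 - ρ + ρ * p) with hlam
  have hsqlam : 0 < Real.sqrt lam := Real.sqrt_pos.mpr hlampos
  have hRu : R.mulVec u₀ = Real.sqrt lam • u₀ := by
    set w := R.mulVec u₀ - Real.sqrt lam • u₀ with hw
    have h2 : R.mulVec (R.mulVec u₀) = lam • u₀ := by
      rw [Matrix.mulVec_mulVec, hRR, hSu]
    have hRw : R.mulVec w = (- Real.sqrt lam) • w := by
      rw [hw, Matrix.mulVec_sub, Matrix.mulVec_smul, h2, smul_sub, smul_smul, neg_mul,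
        Real.mul_self_sqrt hlampos.le, neg_smul, neg_smul, sub_neg_eq_add]
      abel
    have hnn : 0 ≤ w ⬝ᵥ R.mulVec w := by
      have := hR.dotProduct_mulVec_nonneg w
      simpa using this
    rw [hRw] at hnn
    have hnn' : 0 ≤ - Real.sqrt lam * (w ⬝ᵥ w) := by
      simpa [dotProduct_smul, smul_eq_mul] using hnn
    have hwn : 0 ≤ w ⬝ᵥ w := Finset.sum_nonneg fun i _ => mul_self_nonneg (w i)
    have hw0 : w ⬝ᵥ w = 0 := by nlinarith
    have : w = 0 := dotProduct_self_eq_zero.mp hw0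
    rw [hw, sub_eq_zero] at this
    exact this
  have hRsymm : Rᵀ = R := by
    have := hR.1
    simpa [Matrix.IsHermitian, Matrix.conjTranspose_eq_transpose_of_trivial] using this
  have hnum : u₀ ⬝ᵥ R.mulVec s = Real.sqrt lam * (u₀ ⬝ᵥ s) := by
    rw [Matrix.dotProduct_mulVec, ← hRsymm, Matrix.vecMul_transpose, hRu,
      smul_dotProduct, smul_eq_mul]
  -- sum s in terms of u₀ ⬝ᵥ s
  have hsp : Real.sqrt p > 0 := Real.sqrt_pos.mpr hp0
  have hus : u₀ ⬝ᵥ s = (∑ j, s j) / Real.sqrt p := by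
    subst hu₀
    rw [dotProduct, Finset.sum_div]
    exact Finset.sum_congr rfl fun j _ => by ring
  have hE : (∑ j, s j)^2 = p * (u₀ ⬝ᵥ s)^2 := by
    rw [hus, div_pow, Real.sq_sqrt hp0.le]
    field_simp
  set t := (u₀ ⬝ᵥ s)^2 with ht
  have hden : s ⬝ᵥ S.mulVec s = σ^2 * (1-ρ) * (1 + γ * t) := by
    rw [hquad, hs, hE, hγ]
    field_simp
  have hs0 : s ≠ 0 := by
    intro h
    rw [h] at hs
    simp at hs
  have hdpos : 0 < s ⬝ᵥ S.mulVec s := hqpos s hs0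
  have hγt : 0 < 1 + γ * t := by
    rw [hden] at hdpos
    have hpos : 0 < σ^2 * (1-ρ) := by positivity
    by_contra hcon
    push_neg at hcon
    have h2 : σ^2 * (1-ρ) * (1 + γ * t) ≤ 0 :=
      mul_nonpos_iff.mpr (Or.inl ⟨hpos.le, hcon⟩)
    linarith
  have hkey : σ^2 * (1 - ρ + ρ * p) = σ^2 * (1-ρ) * (1+γ) := by
    rw [hγ]; field_simp
  rw [hnum, hden, mul_pow, Real.sq_sqrt hlampos.le, hlam, hkey]
  have hne1 : σ^2 * (1-ρ) ≠ 0 := by positivity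
  have hne2 : (1:ℝ) + γ * t ≠ 0 := ne_of_gt hγt
  field_simp
  ring
end
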